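/- arXiv:1907.10386 — 2 statements merged into one kernel-verified Lean document; each statement's English description precedes it below -/
import Mathlib

section
/- For pointed Σ-labelled rooted trees T1 and T2, T1 ≤ T2 (in the recursively defined preorder) if and only if there exists a homomorphism of pointed labelled rooted trees from T2 to T1. -/
inductive PreTree (α : Type) : Type
  | node : Bool → List (α × PreTree α) → PreTree α

namespace PreTree

variable {α : Type}

def mark : PreTree α → Bool
  | node b _ => b

def children : PreTree α → List (α × PreTree α)
  | node _ cs => cs

def le : PreTree α → PreTree α → Prop
  | node b₁ c₁, node b₂ c₂ =>
      (b₂ = true → b₁ = true) ∧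
      ∀ q, q ∈ c₂ → ∃ p, p ∈ c₁ ∧ p.1 = q.1 ∧ le p.2 q.2
termination_by _ t₂ => sizeOf t₂
decreasing_by
  have h := List.sizeOf_lt_of_mem ‹q ∈ c₂›
  obtain ⟨qa, qt⟩ := q
  simp at h ⊢
  omega

-- The reduced form of a tree: reduce all child subtrees, then for each
-- label keep only the `≤`-minimal attached subtrees.
open scoped Classical in
noncomputable def reduce : PreTree α → PreTree α
  | node b cs =>
      let cs' : List (α × PreTree α) := cs.attach.map fun p => (p.1.1, reduce p.1.2)
      node b (cs'.filter fun q =>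
        decide (∀ q' ∈ cs', q'.1 = q.1 → le q'.2 q.2 → le q.2 q'.2))
termination_by t => sizeOf t
decreasing_by
  have h := List.sizeOf_lt_of_mem p.2
  obtain ⟨⟨pa, pt⟩, hp⟩ := p
  simp at h ⊢
  omega

/-- A tree is reduced if it equals its reduced form. -/
def Reduced (T : PreTree α) : Prop := reduce T = T

/-- The number of marked (point) vertices of a tree. -/
def markCount : PreTree α → ℕ
  | node b cs => (cond b 1 0) + (cs.attach.map fun p => markCount p.1.2).sum
termination_by t => sizeOf t
decreasing_by
  have h := List.sizeOf_lt_of_mem p.2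
  obtain ⟨⟨pa, pt⟩, hp⟩ := p
  simp at h ⊢
  omega

/-- A pointed tree: exactly one vertex is marked as the point. -/
def Pointed (T : PreTree α) : Prop := markCount T = 1

/-- Remove all point marks. -/
def unmark : PreTree α → PreTree α
  | node _ cs => node false (cs.attach.map fun p => (p.1.1, unmark p.1.2))
termination_by t => sizeOf t
decreasing_by
  have h := List.sizeOf_lt_of_mem p.2
  obtain ⟨⟨pa, pt⟩, hp⟩ := p
  simp at h ⊢
  omega

/-- Graft the tree `S` onto the point of `T` (identifying the point of `T`
with the root of `S`); the marks of `S` determine the new point. -/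
def graft (S : PreTree α) : PreTree α → PreTree α
  | node b cs =>
      if b then node S.mark (cs ++ S.children)
      else node b (cs.attach.map fun p => (p.1.1, graft S p.1.2))
termination_by t => sizeOf t
decreasing_by
  have h := List.sizeOf_lt_of_mem p.2
  obtain ⟨⟨pa, pt⟩, hp⟩ := p
  simp at h ⊢
  omega

/-- Move the point of `T` to its root. -/
def pointAtRoot (T : PreTree α) : PreTree α := node true (unmark T).children

/-- Pointed tree concatenation `T ∘ S`. -/
noncomputable def concat (T S : PreTree α) : PreTree α := reduce (graft S T)

/-- The domain operation `D(T)` on pointed trees. -/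
noncomputable def domTree (T : PreTree α) : PreTree α := reduce (pointAtRoot T)

/-- The trivial pointed tree: one vertex, both root and point. -/
def trivialTree : PreTree α := node true []

/-- The two-vertex pointed tree with a single `a`-labelled edge, point at the child. -/
def arrow (a : α) : PreTree α := node false [(a, node true [])]


/-- Set-theoretic equality of trees (children lists regarded as sets). -/
def eqv : PreTree α → PreTree α → Prop
  | node b₁ c₁, node b₂ c₂ =>
      b₁ = b₂ ∧
      (∀ p, p ∈ c₁ → ∃ q, q ∈ c₂ ∧ p.1 = q.1 ∧ eqv p.2 q.2) ∧
      (∀ q, q ∈ c₂ → ∃ p : {x // x ∈ c₁}, p.1.1 = q.1 ∧ eqv p.1.2 q.2)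
termination_by t₁ _ => sizeOf t₁
decreasing_by
  · have h₁ := List.sizeOf_lt_of_mem ‹p ∈ c₁›
    obtain ⟨pa, pt⟩ := p
    simp at h₁ ⊢
    omega
  · have h₁ := List.sizeOf_lt_of_mem p.2
    obtain ⟨⟨pa, pt⟩, hp⟩ := p
    simp at h₁ ⊢
    omega


/-- The subtree of `T` at position `p` (a list of child indices), if it exists. -/
def subAt : List ℕ → PreTree α → Option (PreTree α)
  | [], t => some t
  | i :: is, node _ cs => (cs[i]?).bind fun p => subAt is p.2

/-- `p` is a vertex of `T`. -/
def IsVertex (T : PreTree α) (p : List ℕ) : Prop := ∃ t, subAt p T = some t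

/-- The vertex `p` of `T` is the point (is marked). -/
def IsPoint (T : PreTree α) (p : List ℕ) : Prop :=
  ∃ t, subAt p T = some t ∧ t.mark = true

/-- There is an `a`-labelled edge of `T` from vertex `p` (the parent) to
vertex `q` (the child). -/
def Edge (T : PreTree α) (a : α) (p q : List ℕ) : Prop :=
  ∃ c, subAt p T = some c ∧ ∃ i t, c.children[i]? = some (a, t) ∧ q = p ++ [i]

theorem root_isVertex (T : PreTree α) : IsVertex T [] := ⟨T, rfl⟩

/-- A homomorphism of pointed labelled rooted trees from `S` to `T`:
a map of vertices preserving the labelled edge relations, sending the root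
to the root and points to points. -/
def HomTree (S T : PreTree α) : Prop :=
  ∃ θ : List ℕ → List ℕ,
    θ [] = [] ∧
    (∀ p, IsVertex S p → IsVertex T (θ p)) ∧
    (∀ a p q, Edge S a p q → Edge T a (θ p) (θ q)) ∧
    (∀ p, IsPoint S p → IsPoint T (θ p))

/-- A homomorphism of the pointed tree `T`, viewed as a relational structure,
into the relational structure `(X, f)`, mapping the root of `T` to `x` and
the point of `T` to `y`. -/
def HomInto {X : Type} (T : PreTree α) (f : α → X → X → Prop) (x y : X) : Prop :=
  ∃ θ : List ℕ → X,
    θ [] = x ∧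
    (∀ a p q, Edge T a p q → f a (θ p) (θ q)) ∧
    (∀ p, IsPoint T p → θ p = y)


end PreTree

namespace FreeKAD

/-- Terms of the signature `{∘, 1, D}`. -/
inductive Term1 (α : Type) : Type
  | var : α → Term1 α
  | one : Term1 α
  | comp : Term1 α → Term1 α → Term1 α
  | dom : Term1 α → Term1 α

/-- Terms of the signature `{∘, +, *, 0, 1, D}` (Kleene algebra with domain). -/
inductive TermK (α : Type) : Type
  | var : α → TermK α
  | zero : TermK α
  | one : TermK α
  | comp : TermK α → TermK α → TermK α
  | add : TermK α → TermK α → TermK α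
  | star : TermK α → TermK α
  | dom : TermK α → TermK α

variable {α : Type}

/-- The relational interpretation of a `{∘, 1, D}`-term over a set `X`,
under an assignment `f` of binary relations on `X` to the variables. -/
def rinterp1 {X : Type} (f : α → X → X → Prop) : Term1 α → X → X → Prop
  | .var a => f a
  | .one => fun x y => x = y
  | .comp s t => fun x y => ∃ z, rinterp1 f s x z ∧ rinterp1 f t z y
  | .dom s => fun x y => x = y ∧ ∃ z, rinterp1 f s x z

/-- The relational interpretation of a `{∘, +, *, 0, 1, D}`-term over a set `X`,
under an assignment `f` of binary relations on `X` to the variables. -/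
def rinterpK {X : Type} (f : α → X → X → Prop) : TermK α → X → X → Prop
  | .var a => f a
  | .zero => fun _ _ => False
  | .one => fun x y => x = y
  | .comp s t => fun x y => ∃ z, rinterpK f s x z ∧ rinterpK f t z y
  | .add s t => fun x y => rinterpK f s x y ∨ rinterpK f t x y
  | .star s => Relation.ReflTransGen (rinterpK f s)
  | .dom s => fun x y => x = y ∧ ∃ z, rinterpK f s x z

/-- Composition of binary relations. -/
def relComp {X : Type} (R S : X → X → Prop) : X → X → Prop :=
  fun x y => ∃ z, R x z ∧ S z y

/-- Union of binary relations. -/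
def relUnion {X : Type} (R S : X → X → Prop) : X → X → Prop :=
  fun x y => R x y ∨ S x y

/-- The domain operation on binary relations. -/
def relDom {X : Type} (R : X → X → Prop) : X → X → Prop :=
  fun x y => x = y ∧ ∃ z, R x z

/-- The identity relation. -/
def relId {X : Type} : X → X → Prop := fun x y => x = y

/-- The empty relation. -/
def relEmpty {X : Type} : X → X → Prop := fun _ _ => False

end FreeKAD

namespace FreeKAD

open PreTree

variable {α : Type}

/-- The single-tree interpretation of `{∘, 1, D}`-terms. -/
noncomputable def interp1 : Term1 α → PreTree α
  | .var a => arrow a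
  | .one => trivialTree
  | .comp s t => concat (interp1 s) (interp1 t)
  | .dom s => domTree (interp1 s)

/-- The set of `≤`-maximal elements of a set of trees. -/
def maximalSet (K : Set (PreTree α)) : Set (PreTree α) :=
  {T | T ∈ K ∧ ∀ S ∈ K, le T S → le S T}

/-- Elementwise lifting of pointed tree concatenation to sets of trees. -/
def liftComp (K L : Set (PreTree α)) : Set (PreTree α) :=
  {U | ∃ T ∈ K, ∃ S ∈ L, U = concat T S}

/-- Elementwise lifting of the domain operation to sets of trees. -/
def liftDom (K : Set (PreTree α)) : Set (PreTree α) :=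
  {U | ∃ T ∈ K, U = domTree T}

/-- Iterated lifted concatenation: `K^0 = {trivial}`, `K^(i+1) = K^i ∘ K`. -/
def powC (K : Set (PreTree α)) : ℕ → Set (PreTree α)
  | 0 => {trivialTree}
  | i + 1 => liftComp (powC K i) K

/-- The standard tree interpretation of `{∘, +, *, 0, 1, D}`-terms. -/
def sinterp : TermK α → Set (PreTree α)
  | .var a => {arrow a}
  | .zero => ∅
  | .one => {trivialTree}
  | .comp s t => maximalSet (liftComp (sinterp s) (sinterp t))
  | .add s t => maximalSet (sinterp s ∪ sinterp t)
  | .star s => maximalSet (⋃ i : ℕ, powC (sinterp s) (i + 1))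
  | .dom s => maximalSet (liftDom (sinterp s))

/-- Equality of sets of trees, with trees compared as (hereditarily finite) sets. -/
def SetEqv (K L : Set (PreTree α)) : Prop :=
  (∀ T ∈ K, ∃ S ∈ L, eqv T S) ∧ (∀ S ∈ L, ∃ T ∈ K, eqv T S)

/-- A set of reduced pointed trees is regular if it is the standard tree
interpretation of some `{∘, +, *, 0, 1, D}`-term. -/
def Regular (L : Set (PreTree α)) : Prop := ∃ t : TermK α, L = sinterp t

/-- The set of reduced trees lying `≤`-below some member of `L`. -/
def down (L : Set (PreTree α)) : Set (PreTree α) :=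
  {T | Reduced T ∧ ∃ S ∈ L, le T S}

end FreeKAD

/-!
A homomorphism fixes the root, so it sends the edge to a child of the root of `T₂` to an edge
with the same label out of the root of `T₁`; since every vertex is reached from the root along
edges, the whole subtree below that child is mapped into the subtree below its image, which gives
a homomorphism between the two child subtrees. Conversely, homomorphisms between child subtrees
glue at the roots. So the existence of a homomorphism obeys the same recursion as `≤`.
-/

namespace PreTree

variable {α : Type} {S T : PreTree α} {b : Bool} {cs : List (α × PreTree α)}

theorem subAt_append (p q : List ℕ) (T : PreTree α) :
    subAt (p ++ q) T = (subAt p T).bind (subAt q) := by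
  induction p generalizing T with
  | nil => rfl
  | cons i p ih =>
    obtain ⟨b, cs⟩ := T
    cases h : cs[i]? <;> simp [subAt, h, ih]

theorem sizeOf_lt_of_mem {x : α × PreTree α} (hx : x ∈ cs) : sizeOf x.2 < sizeOf (node b cs) := by
  have := List.sizeOf_lt_of_mem hx
  obtain ⟨a, t⟩ := x
  simp only [node.sizeOf_spec, Prod.mk.sizeOf_spec] at this ⊢
  omega

theorem isVertex_node_cons {i : ℕ} {p : List ℕ} :
    IsVertex (node b cs) (i :: p) ↔ ∃ x, cs[i]? = some x ∧ IsVertex x.2 p := by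
  simp only [IsVertex, subAt, Option.bind_eq_some_iff]
  aesop

theorem isPoint_node_nil : IsPoint (node b cs) [] ↔ b = true := by
  simp [IsPoint, subAt, mark]

theorem isPoint_node_cons {i : ℕ} {p : List ℕ} :
    IsPoint (node b cs) (i :: p) ↔ ∃ x, cs[i]? = some x ∧ IsPoint x.2 p := by
  simp only [IsPoint, subAt, Option.bind_eq_some_iff]
  aesop

theorem edge_node_nil {a : α} {q : List ℕ} :
    Edge (node b cs) a [] q ↔ ∃ i t, cs[i]? = some (a, t) ∧ q = [i] := by
  simp [Edge, subAt, children]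

theorem edge_node_cons {a : α} {i : ℕ} {p q : List ℕ} :
    Edge (node b cs) a (i :: p) q ↔ ∃ x, cs[i]? = some x ∧ ∃ q', q = i :: q' ∧ Edge x.2 a p q' := by
  simp only [Edge, subAt, Option.bind_eq_some_iff]
  aesop

theorem IsPoint.isVertex {p : List ℕ} (h : IsPoint T p) : IsVertex T p :=
  let ⟨t, ht, _⟩ := h; ⟨t, ht⟩

theorem Edge.eq_append {a : α} {p q : List ℕ} (h : Edge T a p q) : ∃ k, q = p ++ [k] :=
  let ⟨_, _, k, _, _, hq⟩ := h; ⟨k, hq⟩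

theorem Edge.isVertex_left {a : α} {p q : List ℕ} (h : Edge T a p q) : IsVertex T p :=
  let ⟨c, hc, _⟩ := h; ⟨c, hc⟩

theorem Edge.isVertex_right {a : α} {p q : List ℕ} (h : Edge T a p q) : IsVertex T q := by
  obtain ⟨⟨b, cs⟩, hc, k, t, hk, rfl⟩ := h
  refine ⟨t, ?_⟩
  simp_all [subAt_append, subAt, children]

theorem exists_edge_of_isVertex_append {p : List ℕ} {k : ℕ} (h : IsVertex T (p ++ [k])) :
    ∃ a, Edge T a p (p ++ [k]) := by
  obtain ⟨t, ht⟩ := h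
  rw [subAt_append] at ht
  obtain ⟨⟨b, cs⟩, hc, hk⟩ := Option.bind_eq_some_iff.mp ht
  obtain ⟨⟨a, t'⟩, hk, -⟩ := Option.bind_eq_some_iff.mp hk
  exact ⟨a, _, hc, k, t', hk, rfl⟩

structure IsHom (S T : PreTree α) (θ : List ℕ → List ℕ) : Prop where
  map_root : θ [] = []
  map_vertex : ∀ p, IsVertex S p → IsVertex T (θ p)
  map_edge : ∀ a p q, Edge S a p q → Edge T a (θ p) (θ q)
  map_point : ∀ p, IsPoint S p → IsPoint T (θ p)

theorem homTree_iff : HomTree S T ↔ ∃ θ, IsHom S T θ :=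
  ⟨fun ⟨θ, h₀, hV, hE, hP⟩ => ⟨θ, h₀, hV, hE, hP⟩, fun ⟨θ, h₀, hV, hE, hP⟩ => ⟨θ, h₀, hV, hE, hP⟩⟩

namespace IsHom

variable {θ : List ℕ → List ℕ}

theorem prefix_map (hθ : IsHom S T θ) (p : List ℕ) {q : List ℕ} (hq : IsVertex S (p ++ q)) :
    θ p <+: θ (p ++ q) := by
  induction q using List.reverseRecOn with
  | nil => simp
  | append_singleton q k ih =>
    rw [← List.append_assoc] at hq ⊢
    obtain ⟨a, he⟩ := exists_edge_of_isVertex_append hq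
    obtain ⟨m, hm⟩ := (hθ.map_edge _ _ _ he).eq_append
    rw [hm]
    exact (ih he.isVertex_left).trans (List.prefix_append _ _)

theorem restrict {b₁ b₂ : Bool} {c₁ c₂ : List (α × PreTree α)} {i : ℕ} {a : α} {t : PreTree α}
    (hθ : IsHom (node b₂ c₂) (node b₁ c₁) θ) (hi : c₂[i]? = some (a, t)) :
    ∃ (j : ℕ) (t' : PreTree α), c₁[j]? = some (a, t') ∧ IsHom t t' fun p => (θ (i :: p)).tail := by
  have hedge : Edge (node b₂ c₂) a [] [i] := edge_node_nil.2 ⟨i, t, hi, rfl⟩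
  obtain ⟨j, t', hj, hθi⟩ := edge_node_nil.1 (hθ.map_root ▸ hθ.map_edge _ _ _ hedge)
  have hθ_cons : ∀ p, IsVertex t p → θ (i :: p) = j :: (θ (i :: p)).tail := by
    intro p hp
    obtain ⟨r, hr⟩ := hθ.prefix_map [i] (isVertex_node_cons.2 ⟨_, hi, hp⟩)
    rw [hθi] at hr
    rw [← List.singleton_append, ← hr]
    rfl
  refine ⟨j, t', hj, ⟨by simp [hθi], fun p hp => ?_, fun a' p q he => ?_, fun p hp => ?_⟩⟩
  · have := hθ.map_vertex _ (isVertex_node_cons.2 ⟨_, hi, hp⟩)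
    rw [hθ_cons p hp, isVertex_node_cons] at this
    simpa [hj] using this
  · have := hθ.map_edge _ _ _ (edge_node_cons.2 ⟨_, hi, q, rfl, he⟩)
    rw [hθ_cons p he.isVertex_left, hθ_cons q he.isVertex_right, edge_node_cons] at this
    simpa [hj] using this
  · have := hθ.map_point _ (isPoint_node_cons.2 ⟨_, hi, hp⟩)
    rw [hθ_cons p hp.isVertex, isPoint_node_cons] at this
    simpa [hj] using this

theorem node {b₁ b₂ : Bool} {c₁ c₂ : List (α × PreTree α)} (hb : b₂ = true → b₁ = true)
    (j : ℕ → ℕ) (θ : ℕ → List ℕ → List ℕ)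
    (h : ∀ i a t, c₂[i]? = some (a, t) → ∃ t', c₁[j i]? = some (a, t') ∧ IsHom t t' (θ i)) :
    IsHom (node b₂ c₂) (node b₁ c₁) fun
      | [] => []
      | i :: p => j i :: θ i p := by
  refine ⟨rfl, ?_, ?_, ?_⟩
  · rintro (_ | ⟨i, p⟩) hp
    · exact root_isVertex _
    obtain ⟨⟨a, t⟩, hi, hp⟩ := isVertex_node_cons.1 hp
    obtain ⟨t', hj, hθ⟩ := h i a t hi
    exact isVertex_node_cons.2 ⟨_, hj, hθ.map_vertex p hp⟩
  · rintro a (_ | ⟨i, p⟩) q he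
    · obtain ⟨i, t, hi, rfl⟩ := edge_node_nil.1 he
      obtain ⟨t', hj, hθ⟩ := h i a t hi
      exact edge_node_nil.2 ⟨j i, t', hj, by simp [hθ.map_root]⟩
    · obtain ⟨⟨a', t⟩, hi, q', rfl, he'⟩ := edge_node_cons.1 he
      obtain ⟨t', hj, hθ⟩ := h i a' t hi
      exact edge_node_cons.2 ⟨_, hj, _, rfl, hθ.map_edge a p q' he'⟩
  · rintro (_ | ⟨i, p⟩) hp
    · exact isPoint_node_nil.2 (hb (isPoint_node_nil.1 hp))
    obtain ⟨⟨a, t⟩, hi, hp⟩ := isPoint_node_cons.1 hp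
    obtain ⟨t', hj, hθ⟩ := h i a t hi
    exact isPoint_node_cons.2 ⟨_, hj, hθ.map_point p hp⟩

end IsHom

theorem homTree_node_iff {b₁ b₂ : Bool} {c₁ c₂ : List (α × PreTree α)} :
    HomTree (node b₂ c₂) (node b₁ c₁) ↔
      (b₂ = true → b₁ = true) ∧ ∀ q ∈ c₂, ∃ p ∈ c₁, p.1 = q.1 ∧ HomTree q.2 p.2 := by
  simp only [homTree_iff]
  constructor
  · rintro ⟨θ, hθ⟩
    refine ⟨fun hb => isPoint_node_nil.1 (hθ.map_root ▸ hθ.map_point [] (isPoint_node_nil.2 hb)),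
      fun ⟨a, t⟩ hq => ?_⟩
    obtain ⟨i, hi⟩ := List.getElem?_of_mem hq
    obtain ⟨j, t', hj, hθ'⟩ := hθ.restrict hi
    exact ⟨(a, t'), List.mem_of_getElem? hj, rfl, _, hθ'⟩
  · rintro ⟨hb, hc⟩
    have : ∀ i : ℕ, ∃ (j : ℕ) (θ : List ℕ → List ℕ), ∀ a t, c₂[i]? = some (a, t) →
        ∃ t', c₁[j]? = some (a, t') ∧ IsHom t t' θ := by
      intro i
      cases hi : c₂[i]? with
      | none => exact ⟨0, id, by simp⟩
      | some q =>
        obtain ⟨⟨a', t'⟩, hp, hpq, θ, hθ⟩ := hc q (List.mem_of_getElem? hi)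
        obtain ⟨j, hj⟩ := List.getElem?_of_mem hp
        exact ⟨j, θ, by rintro a t ⟨rfl⟩; exact ⟨t', by rw [hj, show a' = a from hpq], hθ⟩⟩
    choose j θ hθ using this
    exact ⟨_, IsHom.node hb j θ hθ⟩

end PreTree

namespace FreeKAD
open PreTree

theorem le_iff_exists_hom_general {α : Type} (T₁ T₂ : PreTree α) :
    le T₁ T₂ ↔ HomTree T₂ T₁ := by
  induction T₂ using (measure (sizeOf : PreTree α → ℕ)).wf.induction generalizing T₁ with
  | _ T₂ ih =>
    obtain ⟨b₁, c₁⟩ := T₁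
    obtain ⟨b₂, c₂⟩ := T₂
    rw [le, homTree_node_iff]
    exact and_congr_right' <| forall₂_congr fun q hq => exists_congr fun p =>
      and_congr_right' <| and_congr_right' <| ih q.2 (sizeOf_lt_of_mem hq) p.2

/-- For pointed `Σ`-labelled rooted trees `T₁` and `T₂`,
`T₁ ≤ T₂` (in the recursively defined preorder) if and only if there exists a
homomorphism of pointed labelled rooted trees from `T₂` to `T₁`. -/
theorem le_iff_exists_hom {α : Type} (T₁ T₂ : PreTree α)
    (h₁ : T₁.Pointed) (h₂ : T₂.Pointed) :
    le T₁ T₂ ↔ HomTree T₂ T₁ :=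
  le_iff_exists_hom_general T₁ T₂

end FreeKAD
end

section
/- The preorder ≤ is antisymmetric on reduced pointed Σ-labelled rooted trees, i.e. if T1 and T2 are reduced and T1 ≤ T2 and T2 ≤ T1, then T1 = T2; hence ≤ is a partial order on reduced pointed labelled rooted trees. -/
/-! In a reduced tree each subtree hanging from a vertex by an `a`-edge is `≤`-minimal
among its `a`-siblings. If `T₁ ≤ T₂ ≤ T₁`, a child `p` of the root of `T₁` lies above a
same-labelled child `q` of `T₂`, which lies above a child `p'` of `T₁`; minimality of `p`
gives `p ≤ p' ≤ q`, so `p` and `q` are mutually `≤`, and induction makes them equal. -/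

namespace PreTree

variable {α : Type}

theorem le_node_iff (b₁ b₂ : Bool) (c₁ c₂ : List (α × PreTree α)) :
    le (node b₁ c₁) (node b₂ c₂) ↔
      (b₂ = true → b₁ = true) ∧ ∀ q ∈ c₂, ∃ p ∈ c₁, p.1 = q.1 ∧ le p.2 q.2 := by
  rw [le]

theorem eqv_node_iff (b₁ b₂ : Bool) (c₁ c₂ : List (α × PreTree α)) :
    eqv (node b₁ c₁) (node b₂ c₂) ↔
      b₁ = b₂ ∧
      (∀ p ∈ c₁, ∃ q ∈ c₂, p.1 = q.1 ∧ eqv p.2 q.2) ∧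
      (∀ q ∈ c₂, ∃ p : {x // x ∈ c₁}, p.1.1 = q.1 ∧ eqv p.1.2 q.2) := by
  rw [eqv]

protected theorem le_refl : ∀ T : PreTree α, le T T
  | node b cs => (le_node_iff b b cs cs).2
      ⟨id, fun q hq => ⟨q, hq, rfl, PreTree.le_refl q.2⟩⟩
termination_by T => sizeOf T
decreasing_by
  have h := List.sizeOf_lt_of_mem hq
  obtain ⟨qa, qt⟩ := q
  simp at h ⊢
  omega

protected theorem le_trans : ∀ {T₁ T₂ T₃ : PreTree α}, le T₁ T₂ → le T₂ T₃ → le T₁ T₃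
  | node b₁ c₁, node b₂ c₂, node b₃ c₃, h₁₂, h₂₃ => by
    rw [le_node_iff] at h₁₂ h₂₃ ⊢
    refine ⟨h₁₂.1 ∘ h₂₃.1, fun q hq => ?_⟩
    obtain ⟨p, hp, hpq, hle⟩ := h₂₃.2 q hq
    obtain ⟨r, hr, hrp, hle'⟩ := h₁₂.2 p hp
    exact ⟨r, hr, hrp.trans hpq, PreTree.le_trans hle' hle⟩
termination_by _ _ T₃ => sizeOf T₃
decreasing_by
  have h := List.sizeOf_lt_of_mem hq
  obtain ⟨qa, qt⟩ := q
  simp at h ⊢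
  omega

open scoped Classical in
noncomputable def minimalChildren (cs : List (α × PreTree α)) : List (α × PreTree α) :=
  cs.filter fun q => decide (∀ q' ∈ cs, q'.1 = q.1 → le q'.2 q.2 → le q.2 q'.2)

theorem mem_minimalChildren {cs : List (α × PreTree α)} {q : α × PreTree α} :
    q ∈ minimalChildren cs ↔
      q ∈ cs ∧ ∀ q' ∈ cs, q'.1 = q.1 → le q'.2 q.2 → le q.2 q'.2 := by
  simp only [minimalChildren, List.mem_filter, decide_eq_true_iff]

theorem minimalChildren_minimalChildren (cs : List (α × PreTree α)) :
    minimalChildren (minimalChildren cs) = minimalChildren cs := by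
  classical
  refine List.filter_eq_self.2 fun q hq => decide_eq_true fun q' hq' => ?_
  exact (mem_minimalChildren.1 hq).2 q' (mem_minimalChildren.1 hq').1

theorem reduce_node (b : Bool) (cs : List (α × PreTree α)) :
    reduce (node b cs) = node b (minimalChildren (cs.map fun p => (p.1, reduce p.2))) := by
  rw [reduce, minimalChildren,
    List.attach_map_val (l := cs) (f := fun p : α × PreTree α => (p.1, reduce p.2))]

theorem reduced_reduce : ∀ T : PreTree α, Reduced (reduce T)
  | node b cs => by
    set L := minimalChildren (cs.map fun p => (p.1, reduce p.2))
    have hfix : ∀ q ∈ L, (q.1, reduce q.2) = q := by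
      intro q hq
      obtain ⟨x, hx, rfl⟩ := List.mem_map.1 (mem_minimalChildren.1 hq).1
      rw [reduced_reduce x.2]
    rw [Reduced, reduce_node b cs, reduce_node, List.map_congr_left hfix, List.map_id',
      minimalChildren_minimalChildren]
termination_by T => sizeOf T
decreasing_by
  have h := List.sizeOf_lt_of_mem hx
  obtain ⟨xa, xt⟩ := x
  simp at h ⊢
  omega

theorem Reduced.minimalChildren_eq {b : Bool} {cs : List (α × PreTree α)}
    (h : Reduced (node b cs)) : minimalChildren (cs.map fun p => (p.1, reduce p.2)) = cs := by
  rw [Reduced, reduce_node] at h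
  injection h

theorem Reduced.of_mem {b : Bool} {cs : List (α × PreTree α)} (h : Reduced (node b cs))
    {p : α × PreTree α} (hp : p ∈ cs) : Reduced p.2 := by
  rw [← h.minimalChildren_eq] at hp
  obtain ⟨x, -, rfl⟩ := List.mem_map.1 (mem_minimalChildren.1 hp).1
  exact reduced_reduce x.2

theorem Reduced.le_of_mem {b : Bool} {cs : List (α × PreTree α)} (h : Reduced (node b cs))
    {p p' : α × PreTree α} (hp : p ∈ cs) (hp' : p' ∈ cs) (hl : p'.1 = p.1)
    (hle : le p'.2 p.2) : le p.2 p'.2 := by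
  rw [← h.minimalChildren_eq] at hp hp'
  exact (mem_minimalChildren.1 hp).2 p' (mem_minimalChildren.1 hp').1 hl hle

theorem Reduced.exists_le_le_of_mem {b₁ b₂ : Bool} {c₁ c₂ : List (α × PreTree α)}
    (hr : Reduced (node b₁ c₁)) (h₁₂ : le (node b₁ c₁) (node b₂ c₂))
    (h₂₁ : le (node b₂ c₂) (node b₁ c₁)) {p : α × PreTree α} (hp : p ∈ c₁) :
    ∃ q ∈ c₂, p.1 = q.1 ∧ le p.2 q.2 ∧ le q.2 p.2 := by
  obtain ⟨q, hq, hqp, hqle⟩ := ((le_node_iff _ _ _ _).1 h₂₁).2 p hp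
  obtain ⟨p', hp', hp'q, hp'le⟩ := ((le_node_iff _ _ _ _).1 h₁₂).2 q hq
  have hpp' : le p.2 p'.2 :=
    hr.le_of_mem hp hp' (hp'q.trans hqp) (PreTree.le_trans hp'le hqle)
  exact ⟨q, hq, hqp.symm, PreTree.le_trans hpp' hp'le, hqle⟩

theorem eqv_of_le_of_le : ∀ {T₁ T₂ : PreTree α}, Reduced T₁ → Reduced T₂ →
    le T₁ T₂ → le T₂ T₁ → eqv T₁ T₂
  | node b₁ c₁, node b₂ c₂, hr₁, hr₂, h₁₂, h₂₁ => by
    have hb : b₁ = b₂ := Bool.eq_iff_iff.2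
      ⟨((le_node_iff _ _ _ _).1 h₂₁).1, ((le_node_iff _ _ _ _).1 h₁₂).1⟩
    refine (eqv_node_iff _ _ _ _).2 ⟨hb, fun p hp => ?_, fun q hq => ?_⟩
    · obtain ⟨q, hq, hpq, hle, hge⟩ := hr₁.exists_le_le_of_mem h₁₂ h₂₁ hp
      exact ⟨q, hq, hpq, eqv_of_le_of_le (hr₁.of_mem hp) (hr₂.of_mem hq) hle hge⟩
    · obtain ⟨p, hp, hqp, hle, hge⟩ := hr₂.exists_le_le_of_mem h₂₁ h₁₂ hq
      exact ⟨⟨p, hp⟩, hqp.symm, eqv_of_le_of_le (hr₁.of_mem hp) (hr₂.of_mem hq) hge hle⟩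
termination_by T₁ T₂ => sizeOf T₁ + sizeOf T₂
decreasing_by
  all_goals
    obtain ⟨pa, pt⟩ := p
    obtain ⟨qa, qt⟩ := q
    have h₁ := List.sizeOf_lt_of_mem hp
    have h₂ := List.sizeOf_lt_of_mem hq
    simp at h₁ h₂ ⊢
    omega

end PreTree

namespace FreeKAD
open PreTree

theorem le_antisymm_on_reduced_general {α : Type} (T₁ T₂ : PreTree α)
    (hr₁ : T₁.Reduced) (hr₂ : T₂.Reduced)
    (h₁₂ : le T₁ T₂) (h₂₁ : le T₂ T₁) :
    eqv T₁ T₂ := eqv_of_le_of_le hr₁ hr₂ h₁₂ h₂₁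

/-- The preorder `≤` is antisymmetric on reduced pointed
`Σ`-labelled rooted trees: if `T₁` and `T₂` are reduced and `T₁ ≤ T₂` and
`T₂ ≤ T₁`, then `T₁ = T₂` (equality of trees, whose children collections are
sets, is `eqv`); hence `≤` is a partial order on reduced pointed trees. -/
theorem le_antisymm_on_reduced {α : Type} (T₁ T₂ : PreTree α)
    (hr₁ : T₁.Reduced) (hr₂ : T₂.Reduced)
    (hp₁ : T₁.Pointed) (hp₂ : T₂.Pointed)
    (h₁₂ : le T₁ T₂) (h₂₁ : le T₂ T₁) :
    eqv T₁ T₂ :=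
  le_antisymm_on_reduced_general T₁ T₂ hr₁ hr₂ h₁₂ h₂₁

end FreeKAD
end
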